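/- arXiv:1705.06517 — 2 statements merged into one kernel-verified Lean document; each statement's English description precedes it below -/
import Mathlib

section
/- The normalizer of H in S_{2n} is the semidirect product H ⋊ N, where N = {w̃ : w ∈ S_n}; that is, every element of the normalizer of H can be written uniquely as a product h·w̃ with h ∈ H and w ∈ S_n. -/
/-!
Let `f : Fin (2n) → Fin n` send `i` to the index of its pair, so that `H` is the group of
permutations `u` with `f ∘ u = f`. Conjugating the transposition of a pair by `u` gives the
transposition of the images, so a normalizing `u` maps pairs onto pairs, i.e. `f ∘ u = w ∘ f`
for a (unique) `w ∈ S_n`; conversely any such `u` normalizes `H`. Since `f ∘ w̃ = w ∘ f` as well,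
this says exactly that `u * w̃⁻¹ ∈ H`.
-/

/-- The equivalence `Fin n × Fin 2 ≃ Fin (2*n)`, `(a, b) ↦ 2a + b`. -/
def pairFinEquiv (n : ℕ) : Fin n × Fin 2 ≃ Fin (2 * n) where
  toFun p := ⟨2 * p.1.1 + p.2.1, by have h1 := p.1.2; have h2 := p.2.2; omega⟩
  invFun i := (⟨i.1 / 2, by have := i.2; omega⟩, ⟨i.1 % 2, by omega⟩)
  left_inv := by
    rintro ⟨⟨a, ha⟩, ⟨b, hb⟩⟩
    simp only [Prod.mk.injEq]
    constructor <;> apply Fin.ext <;> simp <;> omega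
  right_inv := by
    rintro ⟨i, hi⟩
    apply Fin.ext
    simp
    omega

/-- The doubling map `w ↦ w̃`, sending a permutation of `{0, …, n-1}` to the permutation of
`{0, …, 2n-1}` with `w̃(2i) = 2w(i)` and `w̃(2i+1) = 2w(i)+1` (the zero-based version of
`w̃(2i) = 2w(i)`, `w̃(2i-1) = 2w(i)-1`). -/
def double {n : ℕ} (w : Equiv.Perm (Fin n)) : Equiv.Perm (Fin (2 * n)) :=
  (pairFinEquiv n).permCongr (Equiv.prodCongr w (Equiv.refl (Fin 2)))

/-- The number of inversions of a permutation, i.e. its Coxeter length. -/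
noncomputable def invLength {n : ℕ} (u : Equiv.Perm (Fin n)) : ℕ :=
  Set.ncard { p : Fin n × Fin n | p.1 < p.2 ∧ u p.2 < u p.1 }

/-- Bruhat order on the symmetric group: the reflexive-transitive closure of the relation
`a → a * t` where `t` is a transposition and `ℓ(a * t) > ℓ(a)`. -/
def BruhatLE {n : ℕ} (x w : Equiv.Perm (Fin n)) : Prop :=
  Relation.ReflTransGen
    (fun a b => (∃ i j : Fin n, b = a * Equiv.swap i j) ∧ invLength a < invLength b) x w

/-- The subgroup `H` of `S_{2n}` of permutations preserving each pair `{2i, 2i+1}`. -/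
def pairSubgroup (n : ℕ) : Subgroup (Equiv.Perm (Fin (2 * n))) where
  carrier := { u | ∀ i, (u i).1 / 2 = i.1 / 2 }
  one_mem' := by intro i; rfl
  mul_mem' := by
    intro a b ha hb i
    rw [Equiv.Perm.mul_apply, ha, hb]
  inv_mem' := by
    intro a ha i
    have h := ha (a⁻¹ i)
    rw [show a (a⁻¹ i) = i from Equiv.apply_symm_apply a i] at h
    omega

/-- The subgroup `K` of `S_{2n}` of parity-preserving permutations. -/
def paritySubgroup (n : ℕ) : Subgroup (Equiv.Perm (Fin (2 * n))) where
  carrier := { u | ∀ i, (u i).1 % 2 = i.1 % 2 }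
  one_mem' := by intro i; rfl
  mul_mem' := by
    intro a b ha hb i
    rw [Equiv.Perm.mul_apply, ha, hb]
  inv_mem' := by
    intro a ha i
    have h := ha (a⁻¹ i)
    rw [show a (a⁻¹ i) = i from Equiv.apply_symm_apply a i] at h
    omega

/-- A permutation of `{0,…,2n-1}` is bi-`H`-reduced if it is increasing on each pair
`{2i, 2i+1}` and so is its inverse. -/
def BiReduced {n : ℕ} (v : Equiv.Perm (Fin (2 * n))) : Prop :=
  ∀ i : Fin n,
    v ⟨2 * i.1, by have := i.2; omega⟩ < v ⟨2 * i.1 + 1, by have := i.2; omega⟩ ∧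
    v⁻¹ ⟨2 * i.1, by have := i.2; omega⟩ < v⁻¹ ⟨2 * i.1 + 1, by have := i.2; omega⟩

/-- Membership of `v` in the double coset `H x H` of `H = pairSubgroup n`. -/
def InPairDoubleCoset {n : ℕ} (x v : Equiv.Perm (Fin (2 * n))) : Prop :=
  ∃ h₁ ∈ pairSubgroup n, ∃ h₂ ∈ pairSubgroup n, v = h₁ * x * h₂

/-- The matrix attached to a double coset `HuH`: the `(i,j)` entry is
`#({2i, 2i+1} ∩ u({2j, 2j+1}))`. -/
noncomputable def cosetMatrix {n : ℕ} (u : Equiv.Perm (Fin (2 * n))) :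
    Matrix (Fin n) (Fin n) ℕ :=
  fun i j => Set.ncard { k : Fin (2 * n) | k.1 / 2 = j.1 ∧ (u k).1 / 2 = i.1 }

/-- The simple reflection `s_j = (j, j+1)` of `S_n` (zero-based). -/
def sRefl {n : ℕ} (j : {j : ℕ // j + 1 < n}) : Equiv.Perm (Fin n) :=
  Equiv.swap ⟨j.1, Nat.lt_of_succ_lt j.2⟩ ⟨j.1 + 1, j.2⟩

/-- A Boolean permutation: a product of distinct simple reflections. -/
def BooleanPerm {n : ℕ} (w : Equiv.Perm (Fin n)) : Prop :=
  ∃ js : List {j : ℕ // j + 1 < n}, (js.map Subtype.val).Nodup ∧ w = (js.map sRefl).prod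

/-- `w` avoids the pattern `(321)`. -/
def Avoids321 {n : ℕ} (w : Equiv.Perm (Fin n)) : Prop :=
  ¬ ∃ i j k : Fin n, i < j ∧ j < k ∧ w k < w j ∧ w j < w i

/-- `w` avoids the pattern `(3412)`. -/
def Avoids3412 {n : ℕ} (w : Equiv.Perm (Fin n)) : Prop :=
  ¬ ∃ i j k l : Fin n, i < j ∧ j < k ∧ k < l ∧ w k < w l ∧ w l < w i ∧ w i < w j

/-- `w` avoids the pattern `(4231)`. -/
def Avoids4231 {n : ℕ} (w : Equiv.Perm (Fin n)) : Prop :=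
  ¬ ∃ i j k l : Fin n, i < j ∧ j < k ∧ k < l ∧ w l < w j ∧ w j < w k ∧ w k < w i

open Function Equiv

section FiberwisePerms

variable {α β : Type*}

def fiberwisePerms (f : α → β) : Subgroup (Perm α) where
  carrier := {u | ∀ a, f (u a) = f a}
  one_mem' _ := rfl
  mul_mem' ha hb a := (ha _).trans (hb a)
  inv_mem' {u} hu a := by simpa using (hu (u⁻¹ a)).symm

variable {f : α → β}

lemma swap_mem_fiberwisePerms [DecidableEq α] {a b : α} (hab : f a = f b) :
    swap a b ∈ fiberwisePerms f := by
  intro x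
  rw [swap_apply_def]
  split_ifs with hxa hxb
  · rw [hxa, hab]
  · rw [hxb, hab]
  · rfl

lemma apply_eq_apply_of_mem_normalizer {u : Perm α}
    (hu : u ∈ Subgroup.normalizer (fiberwisePerms f : Set (Perm α))) {a b : α}
    (hab : f a = f b) : f (u a) = f (u b) := by
  classical
  have hconj := (Subgroup.mem_normalizer_iff.mp hu _).mp (swap_mem_fiberwisePerms hab)
  rw [← swap_apply_apply] at hconj
  simpa using (hconj (u a)).symm

lemma semiconj_perm_inv {u : Perm α} {w : Perm β} (hw : Semiconj f u w) :
    Semiconj f ⇑u⁻¹ ⇑w⁻¹ :=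
  hw.inverses_right u.apply_symm_apply w.symm_apply_apply

lemma conj_mem_fiberwisePerms_of_semiconj {u k : Perm α} {w : Perm β} (hw : Semiconj f u w)
    (hk : k ∈ fiberwisePerms f) : u * k * u⁻¹ ∈ fiberwisePerms f := by
  intro a
  rw [Perm.mul_apply, Perm.mul_apply, hw, hk, semiconj_perm_inv hw]
  exact w.apply_symm_apply _

lemma mem_normalizer_of_semiconj {u : Perm α} {w : Perm β} (hw : Semiconj f u w) :
    u ∈ Subgroup.normalizer (fiberwisePerms f : Set (Perm α)) := by
  refine Subgroup.mem_normalizer_iff.mpr fun k => ⟨conj_mem_fiberwisePerms_of_semiconj hw, ?_⟩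
  intro hk
  simpa [mul_assoc] using conj_mem_fiberwisePerms_of_semiconj (semiconj_perm_inv hw) hk

lemma exists_semiconj_of_mem_normalizer (hf : Surjective f) {u : Perm α}
    (hu : u ∈ Subgroup.normalizer (fiberwisePerms f : Set (Perm α))) :
    ∃ w : Perm β, Semiconj f u w := by
  have hu_inv := inv_mem hu
  set s := surjInv hf
  -- `w` sends the fiber over `b` to the fiber containing the `u`-image of any of its points
  refine ⟨⟨fun b => f (u (s b)), fun b => f (u⁻¹ (s b)), fun b => ?_, fun b => ?_⟩, fun a => ?_⟩
  · simpa [surjInv_eq hf, s] using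
      apply_eq_apply_of_mem_normalizer hu_inv (surjInv_eq hf (f (u (s b))))
  · simpa [surjInv_eq hf, s] using
      apply_eq_apply_of_mem_normalizer hu (surjInv_eq hf (f (u⁻¹ (s b))))
  · exact apply_eq_apply_of_mem_normalizer hu (surjInv_eq hf (f a)).symm

theorem mem_normalizer_fiberwisePerms_iff (hf : Surjective f) {u : Perm α} :
    u ∈ Subgroup.normalizer (fiberwisePerms f : Set (Perm α)) ↔ ∃ w : Perm β, Semiconj f u w :=
  ⟨exists_semiconj_of_mem_normalizer hf, fun ⟨_, hw⟩ => mem_normalizer_of_semiconj hw⟩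

lemma perm_eq_of_semiconj (hf : Surjective f) {u : Perm α} {w w' : Perm β}
    (hw : Semiconj f u w) (hw' : Semiconj f u w') : w = w' := by
  ext1 b
  obtain ⟨a, rfl⟩ := hf b
  exact (hw a).symm.trans (hw' a)

lemma semiconj_mul_of_mem_fiberwisePerms {h v : Perm α} {w : Perm β}
    (hh : h ∈ fiberwisePerms f) (hv : Semiconj f v w) : Semiconj f ⇑(h * v) w := fun a => by
  rw [Perm.mul_apply, hh, hv]

lemma mul_inv_mem_fiberwisePerms {u v : Perm α} {w : Perm β}
    (hu : Semiconj f u w) (hv : Semiconj f v w) : u * v⁻¹ ∈ fiberwisePerms f := fun a => by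
  simp [hu _, ← hv _]

end FiberwisePerms

/-- `⌊i / 2⌋`, the index of the pair containing `i`. -/
def pairIndex (n : ℕ) (i : Fin (2 * n)) : Fin n :=
  ((pairFinEquiv n).symm i).1

lemma pairIndex_surjective (n : ℕ) : Surjective (pairIndex n) :=
  fun j => ⟨pairFinEquiv n (j, 0), by simp [pairIndex]⟩

lemma pairSubgroup_eq_fiberwisePerms (n : ℕ) : pairSubgroup n = fiberwisePerms (pairIndex n) := by
  ext u
  exact forall_congr' fun i => by simp [pairIndex, Fin.ext_iff, pairFinEquiv]

lemma semiconj_pairIndex_double {n : ℕ} (w : Perm (Fin n)) :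
    Semiconj (pairIndex n) (double w) w := fun i => by
  simp [pairIndex, double, permCongr_apply]

/-- The normalizer of `H` in `S_{2n}` is `H ⋊ {w̃ : w ∈ S_n}`: an element lies in the
normalizer of `H` iff it can be written uniquely as `h * w̃` with `h ∈ H`, `w ∈ S_n`. -/
theorem stmt5 (n : ℕ) (u : Equiv.Perm (Fin (2 * n))) :
    u ∈ Subgroup.normalizer (pairSubgroup n : Set (Equiv.Perm (Fin (2 * n)))) ↔
      ∃! p : Equiv.Perm (Fin (2 * n)) × Equiv.Perm (Fin n),
        p.1 ∈ pairSubgroup n ∧ u = p.1 * double p.2 := by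
  rw [pairSubgroup_eq_fiberwisePerms, mem_normalizer_fiberwisePerms_iff (pairIndex_surjective n)]
  constructor
  · rintro ⟨w, hw⟩
    refine ⟨(u * (double w)⁻¹, w),
      ⟨mul_inv_mem_fiberwisePerms hw (semiconj_pairIndex_double w), by simp⟩, ?_⟩
    rintro ⟨h, w'⟩ ⟨hh, rfl⟩
    obtain rfl : w' = w := perm_eq_of_semiconj (pairIndex_surjective n)
      (semiconj_mul_of_mem_fiberwisePerms hh (semiconj_pairIndex_double w')) hw
    simp
  · rintro ⟨⟨h, w⟩, ⟨hh, rfl⟩, -⟩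
    exact ⟨w, semiconj_mul_of_mem_fiberwisePerms hh (semiconj_pairIndex_double w)⟩
end

section
/- Let 𝐰 = s_{j_1}···s_{j_l} be a reduced word for w in a Coxeter group W, and for a mask x ∈ {0,1}^l define the defect set D(x) = {i : π(𝐰^{(i-1)}[x])(α_{j_i}) < 0}, where 𝐰^{(i-1)}[x] is the subword from the first i-1 letters selected by x and α_j is the simple root for s_j. Then ℓ(π(𝐰[x])) = #{i : x_i = 1, i ∉ D(x)} − #{i : x_i = 1, i ∈ D(x)} for every mask x. -/
open CoxeterSystem

variable {B W : Type*} [Group W] {M : CoxeterMatrix B}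

/-- Bruhat order on a Coxeter group: the reflexive-transitive closure of the relation
`a → a * t` where `t` is a reflection and `ℓ(a * t) > ℓ(a)`. -/
def coxBruhatLE (cs : CoxeterSystem M W) (x w : W) : Prop :=
  Relation.ReflTransGen
    (fun a b => (∃ t, cs.IsReflection t ∧ b = a * t) ∧ cs.length a < cs.length b) x w

/-- The product `π(𝐰[x])` of the letters of the word `ω` selected by the mask `x`. -/
def maskProd (cs : CoxeterSystem M W) (ω : List B) (x : Fin ω.length → Bool) : W :=
  cs.wordProd (((List.finRange ω.length).filter (fun i => x i)).map ω.get)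

/-- The product `π(𝐰^{(i-1)}[x])` of the letters of `ω` before position `i` selected by the
mask `x`. -/
def maskPrefixProd (cs : CoxeterSystem M W) (ω : List B) (x : Fin ω.length → Bool)
    (i : Fin ω.length) : W :=
  cs.wordProd (((List.finRange ω.length).filter (fun k => x k && decide (k.1 < i.1))).map ω.get)

/-- Position `i` is a defect of the mask `x`: `π(𝐰^{(i-1)}[x])(α_{j_i}) < 0`, i.e. right
multiplication by the simple reflection `s_{j_i}` decreases the length of `π(𝐰^{(i-1)}[x])`. -/
def IsDefect (cs : CoxeterSystem M W) (ω : List B) (x : Fin ω.length → Bool)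
    (i : Fin ω.length) : Prop :=
  cs.length (maskPrefixProd cs ω x i * cs.simple (ω.get i)) <
    cs.length (maskPrefixProd cs ω x i)

/-!
Reading the mask from left to right, each selected letter multiplies the running product
`π(𝐰^{(i-1)}[x])` on the right by the simple reflection `s_{j_i}`, which changes its length by
exactly `±1`, and by `-1` precisely when `i` is a defect. Summing these changes over the selected
positions gives the length of `π(𝐰[x])`.
-/

open Finset

theorem List.filter_finRange_val_lt (n m : ℕ) :
    (List.finRange n).filter (fun k => decide (k.1 < m)) = (List.finRange n).take m := by
  conv_lhs => rw [← List.take_append_drop m (List.finRange n)]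
  rw [List.filter_append, List.filter_eq_self.2, List.filter_eq_nil_iff.2, List.append_nil]
  · intro k hk
    obtain ⟨j, hj, rfl⟩ := List.getElem_of_mem hk
    simp
  · intro k hk
    obtain ⟨j, hj, rfl⟩ := List.getElem_of_mem hk
    simp only [List.length_take, List.length_finRange, Nat.lt_min] at hj
    simp [hj.1]

theorem List.filter_finRange_and_val_lt_succ {n : ℕ} (p : Fin n → Bool) (i : Fin n) :
    (List.finRange n).filter (fun k => p k && decide (k.1 < i.1 + 1))
      = (List.finRange n).filter (fun k => p k && decide (k.1 < i.1)) ++ [i].filter p := by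
  simp only [← List.filter_filter, List.filter_finRange_val_lt, List.take_add_one,
    List.filter_append]
  simp

theorem Fin.card_filter_and_val_lt_succ {n : ℕ} (P : Fin n → Prop) [DecidablePred P]
    (i : Fin n) :
    #{k | P k ∧ k.1 < i.1 + 1} = #{k | P k ∧ k.1 < i.1} + if P i then 1 else 0 := by
  have hsplit : univ.filter (fun k : Fin n => P k ∧ k.1 < i.1 + 1)
      = univ.filter (fun k => P k ∧ k.1 < i.1) ∪ ({i} : Finset (Fin n)).filter P := by
    ext k
    simp only [mem_filter, mem_univ, true_and, mem_union, mem_singleton, Fin.ext_iff]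
    grind
  rw [hsplit, card_union_of_disjoint (by simp +contextual [disjoint_left, ne_of_lt]),
    filter_singleton]
  split_ifs <;> rfl

section Mask

variable (cs : CoxeterSystem M W) (ω : List B) (x : Fin ω.length → Bool)

/-- `π(𝐰^{(m)}[x])`; unlike `maskPrefixProd`, the bound `m` may be `ω.length`. -/
def maskProdBelow (m : ℕ) : W :=
  cs.wordProd (((List.finRange ω.length).filter (fun k => x k && decide (k.1 < m))).map ω.get)

@[simp]
theorem maskProdBelow_zero : maskProdBelow cs ω x 0 = 1 := by
  simp [maskProdBelow]

theorem maskProdBelow_length : maskProdBelow cs ω x ω.length = maskProd cs ω x := by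
  simp [maskProdBelow, maskProd]

theorem maskProdBelow_succ (i : Fin ω.length) :
    maskProdBelow cs ω x (i.1 + 1)
      = maskPrefixProd cs ω x i * if x i then cs.simple (ω.get i) else 1 := by
  rw [maskProdBelow, List.filter_finRange_and_val_lt_succ, List.map_append, cs.wordProd_append]
  cases hx : x i <;> simp [maskPrefixProd, hx, CoxeterSystem.wordProd]

open Classical in
theorem length_maskProdBelow_add_card_defect {m : ℕ} (hm : m ≤ ω.length) :
    cs.length (maskProdBelow cs ω x m) + #{i | (x i ∧ IsDefect cs ω x i) ∧ i.1 < m}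
      = #{i | (x i ∧ ¬IsDefect cs ω x i) ∧ i.1 < m} := by
  induction m with
  | zero => simp
  | succ m ih =>
    let i : Fin ω.length := ⟨m, hm⟩
    have ih : cs.length (maskPrefixProd cs ω x i) + #{k | (x k ∧ IsDefect cs ω x k) ∧ k.1 < i.1}
        = #{k | (x k ∧ ¬IsDefect cs ω x k) ∧ k.1 < i.1} := ih (Nat.le_of_succ_le hm)
    rw [show m = i.1 from rfl, maskProdBelow_succ, Fin.card_filter_and_val_lt_succ,
      Fin.card_filter_and_val_lt_succ]
    cases hx : x i with
    | false => simpa using ih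
    | true =>
      rcases cs.length_mul_simple (maskPrefixProd cs ω x i) (ω.get i) with hup | hdown
      · have hnd : ¬IsDefect cs ω x i := by unfold IsDefect; omega
        simp only [hnd, if_true, true_and, not_false_eq_true, if_false, and_false]
        omega
      · have hd : IsDefect cs ω x i := by unfold IsDefect; omega
        simp only [hd, if_true, true_and, not_true_eq_false, if_false]
        omega

end Mask

theorem stmt18_general (cs : CoxeterSystem M W) (ω : List B)
    (x : Fin ω.length → Bool) :
    cs.length (maskProd cs ω x)
        + Set.ncard {i : Fin ω.length | x i = true ∧ IsDefect cs ω x i}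
      = Set.ncard {i : Fin ω.length | x i = true ∧ ¬ IsDefect cs ω x i} := by
  classical
  have h := length_maskProdBelow_add_card_defect cs ω x le_rfl
  simp only [maskProdBelow_length, Fin.is_lt, and_true] at h
  simpa only [← Set.ncard_coe_finset, coe_filter_univ] using h

/-- For any mask `x` on a reduced word `ω`,
`ℓ(π(ω[x])) = #{i : x_i = 1, i ∉ D(x)} - #{i : x_i = 1, i ∈ D(x)}`. -/
theorem stmt18 (cs : CoxeterSystem M W) (ω : List B) (hred : cs.IsReduced ω)
    (x : Fin ω.length → Bool) :
    cs.length (maskProd cs ω x)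
        + Set.ncard {i : Fin ω.length | x i = true ∧ IsDefect cs ω x i}
      = Set.ncard {i : Fin ω.length | x i = true ∧ ¬ IsDefect cs ω x i} :=
  stmt18_general cs ω x
end
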